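/- Let (W, 𝒞) be a convex geometry and K ⊆ W a finite subset. Then for every X ⊆ W: ex(K) ⊆ X if and only if K ⊆ co(K ∩ X). -/

import Mathlib

open Set

def interClosed {W : Type*} (𝒞 : Set (Set W)) : Prop := ∀ 𝒳 ⊆ 𝒞, ⋂₀ 𝒳 ∈ 𝒞

def antiExchange {W : Type*} (𝒞 : Set (Set W)) : Prop :=
  ∀ C ∈ 𝒞, ∀ x y : W, x ∉ C → y ∉ C → x ≠ y →
    ∃ D ∈ 𝒞, C ⊆ D ∧ ((x ∈ D ∧ y ∉ D) ∨ (x ∉ D ∧ y ∈ D))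

def hullOf {W : Type*} (𝒞 : Set (Set W)) (X : Set W) : Set W := ⋂₀ {C | C ∈ 𝒞 ∧ X ⊆ C}

def exOf {W : Type*} (𝒞 : Set (Set W)) (X : Set W) : Set W :=
  {x | x ∈ X ∧ x ∉ hullOf 𝒞 (X \ {x})}

/-!
A finite set `K` lies in the hull of its extreme points (Krein–Milman for convex geometries):
delete non-extreme points one at a time. Deleting a non-extreme point `y` creates no new
extreme point `x`, for otherwise, with `C = co (K \ {x, y})`, both `x ∈ co (C ∪ {y})` and
`y ∈ co (C ∪ {x})`, against anti-exchange. Hence `ex K ⊆ X` gives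
`K ⊆ co (ex K) ⊆ co (K ∩ X)`; conversely an extreme point `x ∉ X` would lie in
`co (K ∩ X) ⊆ co (K \ {x})`.
-/

section ConvexGeometry

variable {W : Type*} {𝒞 : Set (Set W)}

theorem subset_hullOf (X : Set W) : X ⊆ hullOf 𝒞 X :=
  fun _ hx _ hC => hC.2 hx

theorem hullOf_mem (hI : interClosed 𝒞) (X : Set W) : hullOf 𝒞 X ∈ 𝒞 :=
  hI _ fun _ hC => hC.1

theorem hullOf_subset_of_mem {C X : Set W} (hC : C ∈ 𝒞) (hXC : X ⊆ C) : hullOf 𝒞 X ⊆ C :=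
  fun _ hx => hx C ⟨hC, hXC⟩

theorem hullOf_mono {X Y : Set W} (h : X ⊆ Y) : hullOf 𝒞 X ⊆ hullOf 𝒞 Y :=
  fun _ hx C hC => hx C ⟨hC.1, h.trans hC.2⟩

theorem hullOf_subset_hullOf (hI : interClosed 𝒞) {X Y : Set W} (h : X ⊆ hullOf 𝒞 Y) :
    hullOf 𝒞 X ⊆ hullOf 𝒞 Y :=
  hullOf_subset_of_mem (hullOf_mem hI Y) h

theorem antiExchange.notMem_hullOf_insert (hAE : antiExchange 𝒞) {C : Set W} (hC : C ∈ 𝒞)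
    {x y : W} (hx : x ∉ C) (hy : y ∉ C) (hxy : x ≠ y) (h : x ∈ hullOf 𝒞 (insert y C)) :
    y ∉ hullOf 𝒞 (insert x C) := by
  intro h'
  obtain ⟨D, hD, hCD, ⟨hxD, hyD⟩ | ⟨hxD, hyD⟩⟩ := hAE C hC x y hx hy hxy
  · exact hyD (hullOf_subset_of_mem hD (insert_subset hxD hCD) h')
  · exact hxD (hullOf_subset_of_mem hD (insert_subset hyD hCD) h)

theorem exOf_sdiff_singleton_subset (hI : interClosed 𝒞) (hAE : antiExchange 𝒞) {K : Set W}
    {y : W} (hy : y ∈ hullOf 𝒞 (K \ {y})) : exOf 𝒞 (K \ {y}) ⊆ exOf 𝒞 K := by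
  rintro x ⟨⟨hxK, hxy⟩, hxC⟩
  refine ⟨hxK, fun hx => ?_⟩
  set C := hullOf 𝒞 ((K \ {y}) \ {x})
  have hK_x : K \ {x} ⊆ insert y C :=
    (sdiff_singleton_subset_iff.mp Set.sdiff_sdiff_comm.subset).trans
      (insert_subset_insert (subset_hullOf _))
  have hK_y : K \ {y} ⊆ insert x C :=
    (sdiff_singleton_subset_iff.mp subset_rfl).trans (insert_subset_insert (subset_hullOf _))
  have hyC : y ∉ C := fun hyC =>
    hxC (hullOf_subset_of_mem (hullOf_mem hI _) (hK_x.trans (insert_subset hyC subset_rfl)) hx)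
  exact hAE.notMem_hullOf_insert (hullOf_mem hI _) hxC hyC hxy (hullOf_mono hK_x hx)
    (hullOf_mono hK_y hy)

theorem subset_hullOf_exOf (hI : interClosed 𝒞) (hAE : antiExchange 𝒞) {K : Set W}
    (hK : K.Finite) : K ⊆ hullOf 𝒞 (exOf 𝒞 K) := by
  induction hn : K.ncard using Nat.strong_induction_on generalizing K with
  | _ n ih =>
    by_cases hex : K ⊆ exOf 𝒞 K
    · exact hex.trans (subset_hullOf _)
    obtain ⟨y, hyK, hy⟩ := not_subset.mp hex
    have hy : y ∈ hullOf 𝒞 (K \ {y}) := by_contra fun h => hy ⟨hyK, h⟩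
    have hK_y : K \ {y} ⊆ hullOf 𝒞 (exOf 𝒞 K) :=
      (ih _ (hn ▸ ncard_sdiff_singleton_lt_of_mem hyK hK) hK.sdiff rfl).trans
        (hullOf_mono (exOf_sdiff_singleton_subset hI hAE hy))
    exact (subset_insert_sdiff_singleton y K).trans
      (insert_subset (hullOf_subset_hullOf hI hK_y hy) hK_y)

end ConvexGeometry

theorem extreme_subset_iff_hull {W : Type*} (𝒞 : Set (Set W))
    (hI : interClosed 𝒞) (hAE : antiExchange 𝒞) (K : Set W) (hK : K.Finite) :
    ∀ X : Set W, exOf 𝒞 K ⊆ X ↔ K ⊆ hullOf 𝒞 (K ∩ X) := by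
  intro X
  constructor
  · intro hX
    exact (subset_hullOf_exOf hI hAE hK).trans (hullOf_mono fun x hx => ⟨hx.1, hX hx⟩)
  · intro h x hx
    by_contra hxX
    have hKX : K ∩ X ⊆ K \ {x} := fun z hz => ⟨hz.1, fun hzx => hxX (hzx ▸ hz.2)⟩
    exact hx.2 (hullOf_mono hKX (h hx.1))
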